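/- Let L1 be a nonempty language, let L2 be a language with blim L2 = {w2} for an ω-word w2, and let w1 be an ω-word such that u·w2 = w1 for every u ∈ L1. Then blim (L1·L2) = {w1}, where L1·L2 = {u ++ v | u ∈ L1, v ∈ L2}. (This is the key claim in the proof that having a unique limit is preserved by concatenation in the prefix-chain case.) -/

import Mathlib

set_option linter.unusedSectionVars false


variable {α : Type*} [Fintype α] [LinearOrder α] [Nonempty α]

/-- `w↾n`, the length-`n` prefix of the ω-word `w`. -/
def restrict (w : ℕ → α) (n : ℕ) : List α := List.ofFn (fun i : Fin n => w i)

/-- `w` is a limit of `L`: every finite prefix of `w` is a proper prefix of some word of `L`. -/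
def blim (L : Set (List α)) : Set (ℕ → α) :=
  {w | ∀ n : ℕ, ∃ u ∈ L, restrict w n <+: u ∧ restrict w n ≠ u}

/-- `u <_ℓ w` for a word `u` and an ω-word `w`. -/
def wordLtOmega (u : List α) (w : ℕ → α) : Prop :=
  u = restrict w u.length ∨
    ∃ (i : ℕ) (h : i < u.length), u.take i = restrict w i ∧ u.get ⟨i, h⟩ < w i

/-- `w <_ℓ u` for an ω-word `w` and a word `u`. -/
def omegaLtWord (w : ℕ → α) (u : List α) : Prop :=
  ∃ (i : ℕ) (h : i < u.length), u.take i = restrict w i ∧ w i < u.get ⟨i, h⟩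

/-- `w <_ℓ w'` for ω-words. -/
def omegaLt (w w' : ℕ → α) : Prop :=
  ∃ n : ℕ, (∀ i < n, w i = w' i) ∧ w n < w' n

/-- `w ≤_ℓ w'` for ω-words. -/
def omegaLe (w w' : ℕ → α) : Prop := w = w' ∨ omegaLt w w'

/-- Concatenation `u·w` of a finite word and an ω-word. -/
def ocat (u : List α) (w : ℕ → α) : ℕ → α :=
  fun i => if h : i < u.length then u.get ⟨i, h⟩ else w (i - u.length)

/-- The strict order `u <_s v` on words. -/
def strictLt (u v : List α) : Prop :=
  ∃ (x y z : List α) (a b : α), a < b ∧ u = x ++ a :: y ∧ v = x ++ b :: z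

/-- `v^ω` for a nonempty word `v`. -/
def wpow (v : List α) (hv : v ≠ []) : ℕ → α :=
  fun i => v.get ⟨i % v.length, Nat.mod_lt _ (List.length_pos_iff.mpr hv)⟩

/-- `u^n`, the `n`-fold concatenation of the word `u` with itself. -/
def npow (u : List α) (n : ℕ) : List α := (List.replicate n u).flatten

lemma restrict_length (w : ℕ → α) (n : ℕ) : (restrict w n).length = n := by simp [restrict]

lemma restrict_getElem (w : ℕ → α) {n i : ℕ} (h : i < n) :
    (restrict w n)[i]'(by simp [restrict, h]) = w i := by simp [restrict]

lemma restrict_prefix (w : ℕ → α) {n m : ℕ} (h : n ≤ m) :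
    restrict w n <+: restrict w m := by
  rw [List.prefix_iff_eq_take]
  apply List.ext_getElem
  · simp [restrict]; omega
  · intro i h1 h2
    simp [restrict]

lemma restrict_add (w : ℕ → α) (l m : ℕ) :
    restrict w (l + m) = restrict w l ++ restrict (fun i => w (i + l)) m := by
  apply List.ext_getElem
  · simp [restrict]
  · intro i h1 h2
    rcases lt_or_ge i l with h | h
    · rw [List.getElem_append_left (by simp [restrict, h])]
      simp [restrict]
    · rw [List.getElem_append_right (by simp [restrict, h])]
      simp only [restrict, List.getElem_ofFn, restrict_length]
      congr 1
      simp [restrict]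
      omega

lemma ocat_restrict_self (u : List α) (w : ℕ → α) :
    restrict (ocat u w) u.length = u := by
  apply List.ext_getElem
  · simp [restrict]
  · intro i h1 h2
    rw [restrict_getElem _ (by simpa [restrict] using h1)]
    simp [ocat, h2]

lemma restrict_ocat (u : List α) (w : ℕ → α) (m : ℕ) :
    restrict (ocat u w) (u.length + m) = u ++ restrict w m := by
  rw [restrict_add]
  congr 1
  · exact ocat_restrict_self u w
  · congr 1
    funext i
    simp [ocat]

lemma proper_prefix_length_lt {l₁ l₂ : List α} (h : l₁ <+: l₂) (hne : l₁ ≠ l₂) :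
    l₁.length < l₂.length :=
  lt_of_le_of_ne h.length_le (fun he => hne (h.eq_of_length he))


/-- if `L2` has unique limit `w2` and `u·w2 = w1` for every `u ∈ L1 ≠ ∅`,
then `L1·L2` has unique limit `w1`. -/
theorem stmt11 (L1 L2 : Set (List α)) (h1 : L1.Nonempty)
    (w2 : ℕ → α) (h2 : blim L2 = {w2})
    (w1 : ℕ → α) (hw : ∀ u ∈ L1, ocat u w2 = w1) :
    blim {w : List α | ∃ u ∈ L1, ∃ v ∈ L2, w = u ++ v} = {w1} := by
  have hw2 : w2 ∈ blim L2 := by rw [h2]; rfl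
  apply Set.eq_of_subset_of_subset
  · -- every limit is w1
    intro w hwb
    by_contra hne0
    have hne : w ≠ w1 := hne0
    have hex : ∃ k, w k ≠ w1 k := Function.ne_iff.mp hne
    set k := Nat.find hex with hkdef
    have hk : w k ≠ w1 k := Nat.find_spec hex
    have hmin : ∀ i < k, w i = w1 i := fun i hi => not_not.mp (Nat.find_min hex hi)
    have H : ∀ n, ∃ u ∈ L1, ∃ v ∈ L2, restrict w n <+: u ++ v ∧ restrict w n ≠ u ++ v := by
      intro n
      obtain ⟨x, ⟨u, hu, v, hv, rfl⟩, h3, h4⟩ := hwb n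
      exact ⟨u, hu, v, hv, h3, h4⟩
    choose u hu v hv hpre hneq using H
    have hures : ∀ n, u n = restrict w1 (u n).length := by
      intro n
      rw [← hw (u n) (hu n)]
      exact (ocat_restrict_self (u n) w2).symm
    have hlen : ∀ n, k < n → (u n).length ≤ k := by
      intro n hn
      by_contra h
      push_neg at h
      apply hk
      have h1' : k < (restrict w n).length := by simp [restrict_length]; omega
      have e1 : (restrict w n)[k]'h1' = (u n ++ v n)[k]'(by
          have := (hpre n).length_le; simp at h1' ⊢; omega) := (hpre n).getElem h1'
      rw [restrict_getElem w (by omega)] at e1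
      rw [List.getElem_append_left h] at e1
      have e2 : (u n).getD k (w k) = w1 k := by
        rw [hures n, List.getD_eq_getElem _ _ (by simp [restrict_length]; exact h)]
        exact restrict_getElem w1 h
      rw [e1, ← e2, List.getD_eq_getElem _ _ h]
    -- pigeonhole on lengths
    have : ∃ y : Fin (k + 1), ((fun n => (⟨min (u n).length k, by omega⟩ : Fin (k+1))) ⁻¹' {y}).Infinite := by
      obtain ⟨y, hy⟩ := Finite.exists_infinite_fiber
        (fun n : ℕ => (⟨min (u n).length k, by omega⟩ : Fin (k+1)))
      exact ⟨y, Set.infinite_coe_iff.mp hy⟩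
    obtain ⟨y, hy⟩ := this
    set l : ℕ := (y : ℕ) with hldef
    have hlk : l ≤ k := by omega
    have hbig : ∀ m, ∃ n, m < n ∧ k < n ∧ (u n).length = l := by
      intro m
      obtain ⟨n, hn1, hn2⟩ := (hy.diff (Set.finite_Iic (max m k))).nonempty
      simp only [Set.mem_Iic, not_le] at hn2
      have hkn : k < n := lt_of_le_of_lt (le_max_right m k) hn2
      have : min (u n).length k = l := by
        have := hn1
        simp only [Set.mem_preimage, Set.mem_singleton_iff] at this
        exact congrArg Fin.val this
      refine ⟨n, lt_of_le_of_lt (le_max_left m k) hn2, hkn, ?_⟩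
      have := hlen n hkn
      omega
    have hwrl : restrict w1 l = restrict w l := by
      apply List.ext_getElem
      · simp [restrict_length]
      · intro i hi1 hi2
        rw [restrict_getElem w1 (by simpa [restrict_length] using hi1),
          restrict_getElem w (by simpa [restrict_length] using hi1)]
        exact (hmin i (by simp [restrict_length] at hi1; omega)).symm
    set w' : ℕ → α := fun i => w (i + l) with hw'def
    have hw'blim : w' ∈ blim L2 := by
      intro m
      obtain ⟨n, hn1, hn2, hn3⟩ := hbig (m + l)
      have hsplit : restrict w n = u n ++ restrict w' (n - l) := by
        calc restrict w n = restrict w (l + (n - l)) := by congr 1; omega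
          _ = restrict w l ++ restrict w' (n - l) := restrict_add w l (n - l)
          _ = u n ++ restrict w' (n - l) := by rw [← hwrl, ← hn3, ← hures n]
      have hp2 : restrict w' (n - l) <+: v n := by
        have := hpre n
        rw [hsplit] at this
        exact (List.prefix_append_right_inj (u n)).mp this
      have hne2 : restrict w' (n - l) ≠ v n := by
        intro h
        apply hneq n
        rw [hsplit, h]
      have hlt2 : n - l < (v n).length := by
        have := proper_prefix_length_lt hp2 hne2
        simpa [restrict_length] using this
      refine ⟨v n, hv n, (restrict_prefix w' (by omega : m ≤ n - l)).trans hp2, ?_⟩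
      intro h
      have := congrArg List.length h
      simp [restrict_length] at this
      omega
    have hw'eq : w' = w2 := by rw [h2] at hw'blim; exact hw'blim
    obtain ⟨n0, _, hn0k, hn0len⟩ := hbig 0
    apply hne
    funext i
    rcases lt_or_ge i l with h | h
    · exact hmin i (by omega)
    · have h3 := congrFun (hw (u n0) (hu n0)) i
      rw [ocat] at h3
      rw [dif_neg (by omega : ¬ i < (u n0).length)] at h3
      rw [hn0len] at h3
      rw [← h3, ← hw'eq]
      show w i = w (i - l + l)
      congr 1
      omega
  · -- w1 is a limit
    rw [Set.singleton_subset_iff]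
    intro n
    obtain ⟨u0, hu0⟩ := h1
    obtain ⟨v, hv, hpre, hneq⟩ := hw2 n
    have hnv : n < v.length := by
      have := proper_prefix_length_lt hpre hneq
      simpa [restrict_length] using this
    refine ⟨u0 ++ v, ⟨u0, hu0, v, hv, rfl⟩, ?_, ?_⟩
    · calc restrict w1 n <+: restrict w1 (u0.length + n) :=
            restrict_prefix w1 (by omega)
        _ = u0 ++ restrict w2 n := by rw [← hw u0 hu0]; exact restrict_ocat u0 w2 n
        _ <+: u0 ++ v := (List.prefix_append_right_inj u0).mpr hpre
    · intro h
      have := congrArg List.length h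
      simp [restrict_length] at this
      omega
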